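/- Let u(x) = x^n + B·x + C ∈ ℤ[x] be a monic polynomial of degree n > 1 with B ≠ 0, C ≠ 0, and without multiple roots. Let ℓ be a prime such that ℓ does not divide gcd(B,C), ℓ does not divide gcd(n,B), and ℓ does not divide gcd(n−1,C). Let ū(x) = u(x) mod ℓ ∈ 𝔽_ℓ[x]. Then: (a) ū(x) has at most one multiple root in an algebraic closure of 𝔽_ℓ; (b) if such a multiple root γ exists, then ℓ does not divide n(n−1)BC, γ is a double root (multiplicity exactly 2) of ū(x), and γ is a nonzero element of 𝔽_ℓ. -/

import Mathlib

open Polynomial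

/-!
At a multiple root `γ` of `u = X ^ n + b X + c` both `u(γ) = γ ^ n + b γ + c` and
`γ u'(γ) = n γ ^ n + b γ` vanish; eliminating `γ ^ n` leaves the linear relation
`b (n - 1) γ = -n c`. The gcd conditions on `ℓ` force every factor in this relation to be
nonzero mod `ℓ`, so `γ = -n c / (b (n - 1))` is determined by the coefficients and lies in
`𝔽_ℓ`. Finally `u''(γ) = n (n - 1) γ ^ (n - 2) ≠ 0`, so the multiplicity is exactly two.
-/

section CommRing

variable {R : Type*} [CommRing R]

theorem derivative_X_pow_add_C_mul_X_add_C (n : ℕ) (b c : R) :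
    derivative (X ^ n + C b * X + C c : R[X]) = C (n : R) * X ^ (n - 1) + C b := by
  simp [derivative_X_pow]

theorem monic_X_pow_add_C_mul_X_add_C [Nontrivial R] {n : ℕ} (hn : 1 < n) (b c : R) :
    (X ^ n + C b * X + C c : R[X]).Monic := by
  rw [add_assoc]
  exact monic_X_pow_add (degree_linear_le.trans_lt (by exact_mod_cast hn))

theorem X_pow_add_C_mul_X_add_C_isRoot_iff (n : ℕ) (b c γ : R) :
    (X ^ n + C b * X + C c : R[X]).IsRoot γ ↔ γ ^ n + b * γ + c = 0 := by
  simp [IsRoot]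

theorem derivative_X_pow_add_C_mul_X_add_C_isRoot_iff (n : ℕ) (b c γ : R) :
    (derivative (X ^ n + C b * X + C c : R[X])).IsRoot γ ↔ n * γ ^ (n - 1) + b = 0 := by
  rw [derivative_X_pow_add_C_mul_X_add_C]
  simp [IsRoot]

theorem mul_sub_one_mul_eq_of_isRoot_of_isRoot_derivative {n : ℕ} (hn : n ≠ 0) {b c γ : R}
    (hroot : (X ^ n + C b * X + C c).IsRoot γ)
    (hroot' : (derivative (X ^ n + C b * X + C c)).IsRoot γ) :
    b * ((n : R) - 1) * γ = -(n * c) := by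
  rw [X_pow_add_C_mul_X_add_C_isRoot_iff] at hroot
  rw [derivative_X_pow_add_C_mul_X_add_C_isRoot_iff] at hroot'
  have hpow : γ ^ n = γ ^ (n - 1) * γ := by rw [← pow_succ, Nat.sub_add_cancel (by omega)]
  linear_combination (n : R) * hroot - γ * hroot' - (n : R) * hpow

theorem rootMultiplicity_X_pow_add_C_mul_X_add_C_le_two [NoZeroDivisors R] {n : ℕ} (b c : R)
    {γ : R} (hn : (n : R) ≠ 0) (hn₁ : (n : R) - 1 ≠ 0) (hγ : γ ≠ 0) :
    (X ^ n + C b * X + C c : R[X]).rootMultiplicity γ ≤ 2 := by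
  have hn₁' : ((n - 1 : ℕ) : R) ≠ 0 := by
    rwa [Nat.cast_sub (Nat.one_le_iff_ne_zero.mpr (by rintro rfl; simp at hn)), Nat.cast_one]
  by_contra! hlt
  have hroot'' := isRoot_iterate_derivative_of_lt_rootMultiplicity hlt
  rw [Function.iterate_succ_apply, Function.iterate_one,
    derivative_X_pow_add_C_mul_X_add_C] at hroot''
  simp only [derivative_add, derivative_C_mul, derivative_X_pow, derivative_C, add_zero,
    IsRoot, eval_mul, eval_C, eval_pow, eval_X] at hroot''
  exact mul_ne_zero hn (mul_ne_zero hn₁' (pow_ne_zero _ hγ)) hroot''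

/-- The three disjunctions are the images of `ℓ ∤ gcd(b, c)`, `ℓ ∤ gcd(n, b)` and
`ℓ ∤ gcd(n - 1, c)`. -/
theorem ne_zero_of_isRoot_of_isRoot_derivative [NoZeroDivisors R] {n : ℕ} (hn : 1 < n)
    {b c γ : R} (hbc : b ≠ 0 ∨ c ≠ 0) (hnb : (n : R) ≠ 0 ∨ b ≠ 0)
    (hnc : (n : R) - 1 ≠ 0 ∨ c ≠ 0) (hroot : (X ^ n + C b * X + C c).IsRoot γ)
    (hroot' : (derivative (X ^ n + C b * X + C c)).IsRoot γ) :
    (n : R) ≠ 0 ∧ (n : R) - 1 ≠ 0 ∧ b ≠ 0 ∧ c ≠ 0 ∧ γ ≠ 0 := by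
  have hrel := mul_sub_one_mul_eq_of_isRoot_of_isRoot_derivative (by omega) hroot hroot'
  rw [X_pow_add_C_mul_X_add_C_isRoot_iff] at hroot
  rw [derivative_X_pow_add_C_mul_X_add_C_isRoot_iff] at hroot'
  have hγ_of_pow : γ ^ (n - 1) = 0 → γ = 0 := (pow_eq_zero_iff (by omega)).mp
  have hn0 : (n : R) ≠ 0 := by
    intro h
    exact hnb.elim (· h) (· (by simpa [h] using hroot'))
  have hb0 : b ≠ 0 := by
    intro h
    obtain rfl : γ = 0 := hγ_of_pow (by simpa [h, hn0] using hroot')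
    exact hbc.elim (· h) (· (by simpa [zero_pow (by omega : n ≠ 0)] using hroot))
  have hn₁ : (n : R) - 1 ≠ 0 := by
    intro h
    exact hnc.elim (· h) (· (by simpa [h, hn0] using hrel))
  have hc0 : c ≠ 0 := by
    intro h
    obtain rfl : γ = 0 := by simpa [h, hb0, hn₁] using hrel
    exact hb0 (by simpa [zero_pow (by omega : n - 1 ≠ 0)] using hroot')
  refine ⟨hn0, hn₁, hb0, hc0, ?_⟩
  rintro rfl
  exact mul_ne_zero hn0 hc0 (by simpa using hrel)

end CommRing

theorem eq_div_of_isRoot_of_isRoot_derivative {K : Type*} [Field K] {n : ℕ} (hn : 1 < n)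
    {b c γ : K} (hbc : b ≠ 0 ∨ c ≠ 0) (hnb : (n : K) ≠ 0 ∨ b ≠ 0)
    (hnc : (n : K) - 1 ≠ 0 ∨ c ≠ 0) (hroot : (X ^ n + C b * X + C c).IsRoot γ)
    (hroot' : (derivative (X ^ n + C b * X + C c)).IsRoot γ) :
    γ = -(n * c) / (b * (n - 1)) := by
  obtain ⟨-, hn₁, hb0, -⟩ := ne_zero_of_isRoot_of_isRoot_derivative hn hbc hnb hnc hroot hroot'
  refine eq_div_of_mul_eq (mul_ne_zero hb0 hn₁) ?_
  rw [mul_comm]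
  exact mul_sub_one_mul_eq_of_isRoot_of_isRoot_derivative (by omega) hroot hroot'

theorem intCast_ne_zero_or_of_not_dvd_gcd {R : Type*} [AddGroupWithOne R] (ℓ : ℕ) [CharP R ℓ]
    {a b : ℤ} (h : ¬ ℓ ∣ Int.gcd a b) : (a : R) ≠ 0 ∨ (b : R) ≠ 0 := by
  simp only [ne_eq, CharP.intCast_eq_zero_iff R ℓ, ← not_and_or]
  exact fun ⟨ha, hb⟩ ↦ h (Int.natCast_dvd_natCast.mp (Int.dvd_coe_gcd ha hb))

theorem trinomial_reduction_at_most_one_double_root_general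
    (n : ℕ) (hn : 1 < n) (B C : ℤ)
    (ℓ : ℕ) [Fact ℓ.Prime]
    (h₁ : ¬ (ℓ ∣ Int.gcd B C))
    (h₂ : ¬ (ℓ ∣ Int.gcd (n : ℤ) B))
    (h₃ : ¬ (ℓ ∣ Int.gcd ((n : ℤ) - 1) C)) :
    (∀ x y : AlgebraicClosure (ZMod ℓ),
      2 ≤ ((X ^ n + Polynomial.C B * X + Polynomial.C C : ℤ[X]).map
            (Int.castRingHom (AlgebraicClosure (ZMod ℓ)))).rootMultiplicity x →
      2 ≤ ((X ^ n + Polynomial.C B * X + Polynomial.C C : ℤ[X]).map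
            (Int.castRingHom (AlgebraicClosure (ZMod ℓ)))).rootMultiplicity y →
      x = y) ∧
    (∀ γ : AlgebraicClosure (ZMod ℓ),
      2 ≤ ((X ^ n + Polynomial.C B * X + Polynomial.C C : ℤ[X]).map
            (Int.castRingHom (AlgebraicClosure (ZMod ℓ)))).rootMultiplicity γ →
      ¬ ((ℓ : ℤ) ∣ (n : ℤ) * ((n : ℤ) - 1) * B * C) ∧
      ((X ^ n + Polynomial.C B * X + Polynomial.C C : ℤ[X]).map
          (Int.castRingHom (AlgebraicClosure (ZMod ℓ)))).rootMultiplicity γ = 2 ∧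
      ∃ γ₀ : ZMod ℓ, γ₀ ≠ 0 ∧
        algebraMap (ZMod ℓ) (AlgebraicClosure (ZMod ℓ)) γ₀ = γ) := by
  set F := AlgebraicClosure (ZMod ℓ)
  have hu : (X ^ n + Polynomial.C B * X + Polynomial.C C : ℤ[X]).map (Int.castRingHom F) =
      X ^ n + Polynomial.C (B : F) * X + Polynomial.C (C : F) := by
    simp only [Polynomial.map_add, Polynomial.map_mul, Polynomial.map_pow, map_X, map_C,
      Int.coe_castRingHom]
  rw [hu]
  have hBC := intCast_ne_zero_or_of_not_dvd_gcd (R := F) ℓ h₁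
  have hnB : (n : F) ≠ 0 ∨ (B : F) ≠ 0 := by
    simpa using intCast_ne_zero_or_of_not_dvd_gcd (R := F) ℓ h₂
  have hnC : (n : F) - 1 ≠ 0 ∨ (C : F) ≠ 0 := by
    simpa using intCast_ne_zero_or_of_not_dvd_gcd (R := F) ℓ h₃
  have hroots (γ : F) := (one_lt_rootMultiplicity_iff_isRoot (t := γ)
    (monic_X_pow_add_C_mul_X_add_C hn (B : F) C).ne_zero).mp
  have hγ_eq (γ : F)
      (hγ : 2 ≤ (X ^ n + Polynomial.C (B : F) * X + Polynomial.C (C : F)).rootMultiplicity γ) :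
      γ = -(n * C) / (B * (n - 1)) :=
    eq_div_of_isRoot_of_isRoot_derivative hn hBC hnB hnC (hroots γ hγ).1 (hroots γ hγ).2
  refine ⟨fun x y hx hy ↦ (hγ_eq x hx).trans (hγ_eq y hy).symm, fun γ hγ ↦ ?_⟩
  obtain ⟨hn0, hn₁, hB0, hC0, hγ0⟩ :=
    ne_zero_of_isRoot_of_isRoot_derivative hn hBC hnB hnC (hroots γ hγ).1 (hroots γ hγ).2
  have hγ₀ : algebraMap (ZMod ℓ) F (-(n * C) / (B * (n - 1))) = γ := by
    simp [hγ_eq γ hγ, map_div₀]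
  refine ⟨?_, le_antisymm (rootMultiplicity_X_pow_add_C_mul_X_add_C_le_two _ _ hn0 hn₁ hγ0) hγ,
    _, fun h ↦ hγ0 (by rw [← hγ₀, h, map_zero]), hγ₀⟩
  rw [← CharP.intCast_eq_zero_iff F ℓ, Int.cast_mul, Int.cast_mul, Int.cast_mul, Int.cast_sub,
    Int.cast_natCast, Int.cast_one]
  exact mul_ne_zero (mul_ne_zero (mul_ne_zero hn0 hn₁) hB0) hC0

/-- Key Lemma (2)(a),(b): let `u(x) = x^n + B·x + C ∈ ℤ[x]` be monic of degree `n > 1` with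
`B ≠ 0`, `C ≠ 0` and without multiple roots, and let `ℓ` be a prime not dividing any of
`gcd(B,C)`, `gcd(n,B)`, `gcd(n-1,C)`.  Then the reduction `ū = u mod ℓ ∈ 𝔽_ℓ[x]` has at
most one multiple root in an algebraic closure of `𝔽_ℓ`, and if a multiple root `γ`
exists then `ℓ ∤ n(n-1)BC`, `γ` is a double root (multiplicity exactly `2`), and `γ` is a
nonzero element of `𝔽_ℓ`. -/
theorem trinomial_reduction_at_most_one_double_root
    (n : ℕ) (hn : 1 < n) (B C : ℤ) (hB : B ≠ 0) (hC : C ≠ 0)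
    (hsep : ∀ x : AlgebraicClosure ℚ,
      ((X ^ n + Polynomial.C B * X + Polynomial.C C : ℤ[X]).map
          (algebraMap ℤ (AlgebraicClosure ℚ))).rootMultiplicity x ≤ 1)
    (ℓ : ℕ) [Fact ℓ.Prime]
    (h₁ : ¬ (ℓ ∣ Int.gcd B C))
    (h₂ : ¬ (ℓ ∣ Int.gcd (n : ℤ) B))
    (h₃ : ¬ (ℓ ∣ Int.gcd ((n : ℤ) - 1) C)) :
    (∀ x y : AlgebraicClosure (ZMod ℓ),
      2 ≤ ((X ^ n + Polynomial.C B * X + Polynomial.C C : ℤ[X]).map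
            (Int.castRingHom (AlgebraicClosure (ZMod ℓ)))).rootMultiplicity x →
      2 ≤ ((X ^ n + Polynomial.C B * X + Polynomial.C C : ℤ[X]).map
            (Int.castRingHom (AlgebraicClosure (ZMod ℓ)))).rootMultiplicity y →
      x = y) ∧
    (∀ γ : AlgebraicClosure (ZMod ℓ),
      2 ≤ ((X ^ n + Polynomial.C B * X + Polynomial.C C : ℤ[X]).map
            (Int.castRingHom (AlgebraicClosure (ZMod ℓ)))).rootMultiplicity γ →
      ¬ ((ℓ : ℤ) ∣ (n : ℤ) * ((n : ℤ) - 1) * B * C) ∧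
      ((X ^ n + Polynomial.C B * X + Polynomial.C C : ℤ[X]).map
          (Int.castRingHom (AlgebraicClosure (ZMod ℓ)))).rootMultiplicity γ = 2 ∧
      ∃ γ₀ : ZMod ℓ, γ₀ ≠ 0 ∧
        algebraMap (ZMod ℓ) (AlgebraicClosure (ZMod ℓ)) γ₀ = γ) :=
  trinomial_reduction_at_most_one_double_root_general n hn B C ℓ h₁ h₂ h₃
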